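/- A non-dictatorial voting by committees f^W on the universal domain of strict preferences on 2^K is not obviously manipulable if and only if for every object k ∈ K: (i) the intersection of all coalitions in W_k is empty, and (ii) every coalition in W_k has at least two members. -/

import Mathlib

/-- A preference profile: each agent `i : Fin n` has a strict preference,
modeled as a linear order on the set of alternatives `X`. -/
abbrev Profile (n : ℕ) (X : Type*) := Fin n → LinearOrder X

/-- The top (best) alternative of a preference `L`. -/
noncomputable def top {X : Type*} [Fintype X] [Nonempty X] (L : LinearOrder X) : X :=
  @Finset.max' X L Finset.univ Finset.univ_nonempty

/-- `x` is strictly preferred to `y` according to `L`. -/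
def prefers {X : Type*} (L : LinearOrder X) (x y : X) : Prop := L.lt y x

/-- The option set left open by preference `L` of agent `i` at rule `f`. -/
def OptionSet {n : ℕ} {X : Type*} (f : Profile n X → X) (i : Fin n) (L : LinearOrder X) :
    Set X :=
  {x | ∃ P : Profile n X, P i = L ∧ f P = x}

/-- `Li'` is a profitable manipulation of `f` at (true preference) `Li` for agent `i`. -/
def IsManip {n : ℕ} {X : Type*} (f : Profile n X → X) (i : Fin n)
    (Li Li' : LinearOrder X) : Prop :=
  ∃ P : Profile n X, P i = Li ∧ prefers Li (f (Function.update P i Li')) (f P)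

/-- The worst element of `O(Li')` is strictly `Li`-preferred to the worst element of `O(Li)`.
For nonempty finite option sets this is equivalent to: some element of `O(Li)` is strictly
worse (w.r.t. `Li`) than every element of `O(Li')`. -/
def WorstImproves {n : ℕ} {X : Type*} (f : Profile n X → X) (i : Fin n)
    (Li Li' : LinearOrder X) : Prop :=
  ∃ w ∈ OptionSet f i Li, ∀ w' ∈ OptionSet f i Li', prefers Li w' w

/-- The best element of `O(Li')` is strictly `Li`-preferred to the best element of `O(Li)`.
For nonempty finite option sets this is equivalent to: some element of `O(Li')` is strictly
better (w.r.t. `Li`) than every element of `O(Li)`. -/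
def BestImproves {n : ℕ} {X : Type*} (f : Profile n X → X) (i : Fin n)
    (Li Li' : LinearOrder X) : Prop :=
  ∃ b' ∈ OptionSet f i Li', ∀ b ∈ OptionSet f i Li, prefers Li b' b

/-- `Li'` is an obvious manipulation of `f` at `Li` for agent `i`. -/
def IsObviousManip {n : ℕ} {X : Type*} (f : Profile n X → X) (i : Fin n)
    (Li Li' : LinearOrder X) : Prop :=
  IsManip f i Li Li' ∧ (WorstImproves f i Li Li' ∨ BestImproves f i Li Li')

/-- `f` is not obviously manipulable. -/
def NOM {n : ℕ} {X : Type*} (f : Profile n X → X) : Prop :=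
  ∀ (i : Fin n) (Li Li' : LinearOrder X), ¬ IsObviousManip f i Li Li'

/-- `f` is tops-only. -/
def TopsOnly {n : ℕ} {X : Type*} [Fintype X] [Nonempty X] (f : Profile n X → X) : Prop :=
  ∀ P P' : Profile n X, (∀ i, top (P i) = top (P' i)) → f P = f P'

/-- The set `V_i` of alternatives that agent `i` vetoes via some preference. -/
def VetoSet {n : ℕ} {X : Type*} (f : Profile n X → X) (i : Fin n) : Set X :=
  {x | ∃ L : LinearOrder X, x ∉ OptionSet f i L}

/-- The set `SV_i` of alternatives strongly vetoed by agent `i`: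
`x` is vetoed via `L` precisely when the top of `L` differs from `x`. -/
def StrongVetoSet {n : ℕ} {X : Type*} [Fintype X] [Nonempty X]
    (f : Profile n X → X) (i : Fin n) : Set X :=
  {x | ∀ L : LinearOrder X, x ∉ OptionSet f i L ↔ top L ≠ x}

/-- `f` is dictatorial: some agent's top alternative is always selected. -/
def Dictatorial {n : ℕ} {X : Type*} [Fintype X] [Nonempty X]
    (f : Profile n X → X) : Prop :=
  ∃ i : Fin n, ∀ P : Profile n X, f P = top (P i)

open scoped Classical

/-- `Wk` is a committee: a nonempty, monotone family of nonempty coalitions of agents. -/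
def Committee {n : ℕ} (Wk : Set (Finset (Fin n))) : Prop :=
  Wk.Nonempty ∧ (∀ M ∈ Wk, M.Nonempty) ∧
    ∀ M ∈ Wk, ∀ M' : Finset (Fin n), M ⊆ M' → M' ∈ Wk

/-- Voting by committees: object `k` is chosen iff the set of agents whose top contains
`k` is a winning coalition in `W k`. Alternatives are subsets of the set `K` of objects. -/
noncomputable def vbc {n : ℕ} {K : Type*} [Fintype K] [DecidableEq K]
    (W : K → Set (Finset (Fin n))) (P : Profile n (Finset K)) : Finset K :=
  Finset.univ.filter fun k =>
    (Finset.univ.filter fun i : Fin n => k ∈ top (P i)) ∈ W k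

section Aux
variable {X : Type*} [Fintype X] [Nonempty X]

lemma le_top' (L : LinearOrder X) (y : X) : L.le y (top L) :=
  @Finset.le_max' X L _ y (Finset.mem_univ y)

lemma top_eq_of_forall_le (L : LinearOrder X) (x : X) (h : ∀ y, L.le y x) : top L = x :=
  L.le_antisymm _ _ (@Finset.max'_le X L _ _ x (fun y _ => h y)) (le_top' L x)

noncomputable def rankOrder (f : X → ℕ) (hf : Function.Injective f) : LinearOrder X :=
  LinearOrder.lift' f hf

lemma rankOrder_le (f : X → ℕ) (hf : Function.Injective f) (a b : X) :
    (rankOrder f hf).le a b ↔ f a ≤ f b := Iff.rfl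

lemma rankOrder_lt (f : X → ℕ) (hf : Function.Injective f) (a b : X) :
    (rankOrder f hf).lt a b ↔ f a < f b := by
  rw [(rankOrder f hf).lt_iff_le_not_ge, lt_iff_le_not_ge]
  exact Iff.rfl

lemma exists_linearOrder_top (x : X) : ∃ L : LinearOrder X, top L = x := by
  classical
  let e := Fintype.equivFin X
  let f : X → ℕ := fun y => if y = x then Fintype.card X else (e y : ℕ)
  have hf : Function.Injective f := by
    intro a b h
    by_cases ha : a = x <;> by_cases hb : b = x <;>
      simp only [f, ha, hb, if_pos, if_neg, if_true, if_false] at h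
    · rw [ha, hb]
    · exact absurd h.symm (ne_of_lt (e b).isLt)
    · exact absurd h (ne_of_lt (e a).isLt)
    · exact e.injective (Fin.val_injective h)
  refine ⟨rankOrder f hf, top_eq_of_forall_le _ _ (fun y => (rankOrder_le f hf y x).2 ?_)⟩
  simp only [f, if_pos rfl]
  by_cases hy : y = x
  · simp [hy]
  · simp only [if_neg hy]
    exact le_of_lt (e y).isLt

lemma exists_linearOrder_top_bot (x w : X) (hwx : w ≠ x) :
    ∃ L : LinearOrder X, top L = x ∧ ∀ y, y ≠ w → L.lt w y := by
  classical
  let e := Fintype.equivFin X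
  let f : X → ℕ := fun y => if y = x then Fintype.card X + 1 else if y = w then 0 else (e y : ℕ) + 1
  have key : ∀ y, (y = x ∧ f y = Fintype.card X + 1) ∨ (y = w ∧ f y = 0) ∨
      (y ≠ x ∧ y ≠ w ∧ f y = (e y : ℕ) + 1) := by
    intro y
    by_cases h1 : y = x
    · exact Or.inl ⟨h1, by simp [f, h1]⟩
    by_cases h2 : y = w
    · exact Or.inr (Or.inl ⟨h2, by simp only [f]; rw [if_neg h1, if_pos h2]⟩)
    · exact Or.inr (Or.inr ⟨h1, h2, by simp only [f]; rw [if_neg h1, if_neg h2]⟩)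
  have hf : Function.Injective f := by
    intro a b h
    rcases key a with ⟨ha, hfa⟩ | ⟨ha, hfa⟩ | ⟨ha1, ha2, hfa⟩ <;>
      rcases key b with ⟨hb, hfb⟩ | ⟨hb, hfb⟩ | ⟨hb1, hb2, hfb⟩ <;>
      rw [hfa, hfb] at h <;>
      first
      | (exact ha.trans hb.symm)
      | (exact e.injective (Fin.val_injective (by omega)))
      | (have := (e a).isLt; have := (e b).isLt; omega)
  have hfw : f w = 0 := by
    rcases key w with ⟨hw, _⟩ | ⟨_, hfw⟩ | ⟨_, hw, _⟩
    · exact absurd hw hwx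
    · exact hfw
    · exact absurd rfl hw
  refine ⟨rankOrder f hf, top_eq_of_forall_le _ _ (fun y => (rankOrder_le f hf y x).2 ?_), ?_⟩
  · have hfx : f x = Fintype.card X + 1 := by simp [f]
    rw [hfx]
    rcases key y with ⟨_, hfy⟩ | ⟨_, hfy⟩ | ⟨_, _, hfy⟩ <;> rw [hfy] <;>
      first
      | omega
      | (have := (e y).isLt; omega)
  · intro y hy
    rw [rankOrder_lt, hfw]
    rcases key y with ⟨_, hfy⟩ | ⟨hyw, _⟩ | ⟨_, _, hfy⟩
    · rw [hfy]; omega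
    · exact absurd hyw hy
    · rw [hfy]; omega

end Aux

section Main
open scoped Classical
variable {n : ℕ} {K : Type*} [Fintype K] [DecidableEq K]

lemma committee_univ_mem {Wk : Set (Finset (Fin n))} (h : Committee Wk) :
    Finset.univ ∈ Wk := by
  obtain ⟨⟨M, hM⟩, _, hmono⟩ := h
  exact hmono M hM Finset.univ (Finset.subset_univ M)

lemma committee_empty_not_mem {Wk : Set (Finset (Fin n))} (h : Committee Wk) :
    (∅ : Finset (Fin n)) ∉ Wk :=
  fun hmem => by simpa using h.2.1 ∅ hmem

lemma mem_vbc_iff (W : K → Set (Finset (Fin n))) (P : Profile n (Finset K)) (k : K) :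
    k ∈ vbc W P ↔ (Finset.univ.filter fun j : Fin n => k ∈ top (P j)) ∈ W k := by
  simp [vbc]

lemma optionSet_necc (W : K → Set (Finset (Fin n))) (hW : ∀ k, Committee (W k))
    (i : Fin n) (L : LinearOrder (Finset K)) (x : Finset K)
    (hx : x ∈ OptionSet (vbc W) i L) :
    (∀ k ∈ top L, {i} ∈ W k → k ∈ x) ∧ (∀ k ∈ x, (∀ M ∈ W k, i ∈ M) → k ∈ top L) := by
  obtain ⟨P, hPi, hfx⟩ := hx
  subst hfx
  constructor
  · intro k hk hfi
    rw [mem_vbc_iff]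
    refine (hW k).2.2 {i} hfi _ ?_
    intro j hj
    rw [Finset.mem_singleton] at hj
    subst hj
    refine Finset.mem_filter.2 ⟨Finset.mem_univ _, ?_⟩
    rw [hPi]; exact hk
  · intro k hk hv
    rw [mem_vbc_iff] at hk
    have hmem := hv _ hk
    rw [Finset.mem_filter] at hmem
    rw [← hPi]; exact hmem.2

lemma optionSet_suff (W : K → Set (Finset (Fin n))) (hW : ∀ k, Committee (W k))
    (i : Fin n) (L : LinearOrder (Finset K)) (x : Finset K)
    (h1 : ∀ k ∈ top L, {i} ∈ W k → k ∈ x)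
    (h2 : ∀ k ∈ x, (∀ M ∈ W k, i ∈ M) → k ∈ top L) :
    x ∈ OptionSet (vbc W) i L := by
  classical
  have hMk : ∀ k : K, ∃ M : Finset (Fin n), k ∈ x → k ∉ top L → M ∈ W k ∧ i ∉ M := by
    intro k
    by_cases hkx : k ∈ x ∧ k ∉ top L
    · have hnv : ¬ ∀ M ∈ W k, i ∈ M := fun hv => hkx.2 (h2 k hkx.1 hv)
      push_neg at hnv
      obtain ⟨M, hM, hiM⟩ := hnv
      exact ⟨M, fun _ _ => ⟨hM, hiM⟩⟩
    · exact ⟨∅, fun ha hb => absurd ⟨ha, hb⟩ hkx⟩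
  choose M hM using hMk
  set C : K → Finset (Fin n) := fun k =>
    if k ∈ x then (if k ∈ top L then Finset.univ else M k)
    else (if k ∈ top L then {i} else ∅) with hC
  have hT : ∀ j : Fin n, ∃ Lj : LinearOrder (Finset K),
      top Lj = Finset.univ.filter (fun k => j ∈ C k) :=
    fun j => exists_linearOrder_top _
  choose Lf hLf using hT
  set P : Profile n (Finset K) := fun j => if j = i then L else Lf j with hP
  have hPi : P i = L := by simp [hP]
  refine ⟨P, hPi, ?_⟩
  ext k
  rw [mem_vbc_iff]
  have hmem : ∀ j, (j ∈ (Finset.univ.filter fun j => k ∈ top (P j))) ↔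
      (if j = i then k ∈ top L else j ∈ C k) := by
    intro j
    rw [Finset.mem_filter]
    by_cases hj : j = i
    · subst hj
      simp [hPi]
    · have hPj : P j = Lf j := by simp [hP, hj]
      rw [if_neg hj, hPj, hLf j]
      simp [Finset.mem_filter]
  by_cases hkx : k ∈ x <;> by_cases hkt : k ∈ top L
  · have hcoal : (Finset.univ.filter fun j => k ∈ top (P j)) = Finset.univ := by
      ext j
      rw [hmem j]
      by_cases hj : j = i <;>
        simp [hj, hC, hkx, hkt]
    rw [hcoal]
    simp [hkx, committee_univ_mem (hW k)]
  · have hMk' := hM k hkx hkt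
    have hcoal : (Finset.univ.filter fun j => k ∈ top (P j)) = M k := by
      ext j
      rw [hmem j]
      by_cases hj : j = i
      · subst hj
        simp [hkt, hMk'.2]
      · simp [hj, hC, hkx, hkt]
    rw [hcoal]
    simp [hkx, hMk'.1]
  · have hnotW : ({i} : Finset (Fin n)) ∉ W k := fun hc => hkx (h1 k hkt hc)
    have hcoal : (Finset.univ.filter fun j => k ∈ top (P j)) = {i} := by
      ext j
      rw [hmem j, Finset.mem_singleton]
      by_cases hj : j = i
      · simp [hj, hkt]
      · simp [hj, hC, hkx, hkt]
    rw [hcoal]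
    simp [hkx, hnotW]
  · have hcoal : (Finset.univ.filter fun j => k ∈ top (P j)) = ∅ := by
      ext j
      rw [hmem j]
      by_cases hj : j = i
      · simp [hj, hkt]
      · simp [hj, hC, hkx, hkt]
    rw [hcoal]
    simp [hkx, committee_empty_not_mem (hW k)]

lemma dict_of (W : K → Set (Finset (Fin n))) (hW : ∀ k, Committee (W k)) (i : Fin n)
    (h : ∀ k, {i} ∈ W k ∧ ∀ M ∈ W k, i ∈ M) : Dictatorial (vbc W) := by
  refine ⟨i, fun P => ?_⟩
  ext k
  rw [mem_vbc_iff]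
  constructor
  · intro hk
    have hmem := (h k).2 _ hk
    rw [Finset.mem_filter] at hmem
    exact hmem.2
  · intro hk
    refine (hW k).2.2 {i} (h k).1 _ ?_
    intro j hj
    rw [Finset.mem_singleton] at hj
    subst hj
    exact Finset.mem_filter.2 ⟨Finset.mem_univ _, hk⟩

lemma combo (hK : 2 ≤ Fintype.card K)
    (FA FB : K → Prop) (k₀ k₁ : K) (h0 : FA k₀ ∨ FB k₀) (h1 : ¬ FA k₁ ∨ ¬ FB k₁) :
    ∃ t w t' : Finset K,
      (∀ k ∈ t, FA k → k ∈ w) ∧ (∀ k ∈ w, FB k → k ∈ t) ∧ w ≠ t ∧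
      ¬ ((∀ k ∈ t', FA k → k ∈ w) ∧ (∀ k ∈ w, FB k → k ∈ t')) := by
  classical
  rcases h0 with hA0 | hB0
  · by_cases hc : ∃ c, ¬ FA c
    · obtain ⟨c, hc⟩ := hc
      refine ⟨{c}, ∅, {k₀}, ?_, ?_, ?_, ?_⟩
      · intro k hk hf
        rw [Finset.mem_singleton] at hk
        subst hk
        exact absurd hf hc
      · intro k hk
        simp at hk
      · exact (Finset.singleton_ne_empty c).symm
      · rintro ⟨h, -⟩
        simpa using h k₀ (Finset.mem_singleton_self k₀) hA0
    · push_neg at hc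
      have hB1 : ¬ FB k₁ := h1.resolve_left (not_not.mpr (hc k₁))
      by_cases hk01 : k₁ = k₀
      · obtain ⟨c, hcne⟩ := Fintype.exists_ne_of_one_lt_card (by omega) k₀
        refine ⟨∅, {k₀}, {c}, ?_, ?_, ?_, ?_⟩
        · intro k hk
          simp at hk
        · intro k hk hf
          rw [Finset.mem_singleton] at hk
          subst hk
          exact absurd hf (hk01 ▸ hB1)
        · exact Finset.singleton_ne_empty k₀
        · rintro ⟨h, -⟩
          have := h c (Finset.mem_singleton_self c) (hc c)
          rw [Finset.mem_singleton] at this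
          exact hcne this
      · refine ⟨∅, {k₁}, {k₀}, ?_, ?_, ?_, ?_⟩
        · intro k hk
          simp at hk
        · intro k hk hf
          rw [Finset.mem_singleton] at hk
          subst hk
          exact absurd hf hB1
        · exact Finset.singleton_ne_empty k₁
        · rintro ⟨h, -⟩
          have := h k₀ (Finset.mem_singleton_self k₀) (hc k₀)
          rw [Finset.mem_singleton] at this
          exact hk01 this.symm
  · by_cases hc : ∃ c, ¬ FB c
    · obtain ⟨c, hcB⟩ := hc
      have hck : c ≠ k₀ := fun h => hcB (h ▸ hB0)
      refine ⟨{k₀}, insert c {k₀}, ∅, ?_, ?_, ?_, ?_⟩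
      · intro k hk _
        rw [Finset.mem_singleton] at hk
        subst hk
        exact Finset.mem_insert_of_mem (Finset.mem_singleton_self _)
      · intro k hk hf
        rw [Finset.mem_insert] at hk
        rcases hk with h | h
        · exact absurd hf (h ▸ hcB)
        · exact h
      · intro h
        have : c ∈ ({k₀} : Finset K) := h ▸ Finset.mem_insert_self c {k₀}
        rw [Finset.mem_singleton] at this
        exact hck this
      · rintro ⟨-, h⟩
        simpa using h k₀ (Finset.mem_insert_of_mem (Finset.mem_singleton_self _)) hB0
    · push_neg at hc
      have hA1 : ¬ FA k₁ := h1.resolve_right (not_not.mpr (hc k₁))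
      by_cases hk01 : k₁ = k₀
      · by_cases hc2 : ∃ c, ¬ FA c ∧ c ≠ k₀
        · obtain ⟨c, hcA, hck⟩ := hc2
          refine ⟨insert c {k₀}, {k₀}, ∅, ?_, ?_, ?_, ?_⟩
          · intro k hk hf
            rw [Finset.mem_insert] at hk
            rcases hk with h | h
            · exact absurd hf (h ▸ hcA)
            · exact h
          · intro k hk _
            rw [Finset.mem_singleton] at hk
            exact hk ▸ Finset.mem_insert_of_mem (Finset.mem_singleton_self _)
          · intro h
            have : c ∈ ({k₀} : Finset K) := h.symm ▸ Finset.mem_insert_self c {k₀}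
            rw [Finset.mem_singleton] at this
            exact hck this
          · rintro ⟨-, h⟩
            simpa using h k₀ (Finset.mem_singleton_self _) (hc k₀)
        · push_neg at hc2
          obtain ⟨c, hcne⟩ := Fintype.exists_ne_of_one_lt_card (by omega) k₀
          have hcA : FA c := by
            by_contra h
            exact hcne (hc2 c h)
          refine ⟨{k₀}, ∅, {c}, ?_, ?_, ?_, ?_⟩
          · intro k hk hf
            rw [Finset.mem_singleton] at hk
            subst hk
            exact absurd hf (hk01 ▸ hA1)
          · intro k hk
            simp at hk
          · exact (Finset.singleton_ne_empty k₀).symm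
          · rintro ⟨h, -⟩
            simpa using h c (Finset.mem_singleton_self c) hcA
      · refine ⟨insert k₁ {k₀}, {k₀}, ∅, ?_, ?_, ?_, ?_⟩
        · intro k hk hf
          rw [Finset.mem_insert] at hk
          rcases hk with h | h
          · exact absurd hf (h ▸ hA1)
          · exact h
        · intro k hk _
          rw [Finset.mem_singleton] at hk
          exact hk ▸ Finset.mem_insert_of_mem (Finset.mem_singleton_self _)
        · intro h
          have : k₁ ∈ ({k₀} : Finset K) := h.symm ▸ Finset.mem_insert_self k₁ {k₀}
          rw [Finset.mem_singleton] at this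
          exact hk01 this
        · rintro ⟨-, h⟩
          simpa using h k₀ (Finset.mem_singleton_self _) (hc k₀)

lemma not_NOM_of (W : K → Set (Finset (Fin n))) (hW : ∀ k, Committee (W k))
    (hK : 2 ≤ Fintype.card K) (hnd : ¬ Dictatorial (vbc W)) (i : Fin n) (k₀ : K)
    (h0 : {i} ∈ W k₀ ∨ ∀ M ∈ W k₀, i ∈ M) : ¬ NOM (vbc W) := by
  have hk₁ : ∃ k₁, ¬ ({i} ∈ W k₁) ∨ ¬ (∀ M ∈ W k₁, i ∈ M) := by
    by_contra hall
    push_neg at hall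
    exact hnd (dict_of W hW i hall)
  obtain ⟨k₁, hk₁⟩ := hk₁
  obtain ⟨t, w, t', hc1, hc2, hwt, hc4⟩ :=
    combo hK (fun k => {i} ∈ W k) (fun k => ∀ M ∈ W k, i ∈ M) k₀ k₁ h0 hk₁
  obtain ⟨Li, htop, hbot⟩ := exists_linearOrder_top_bot t w hwt
  obtain ⟨Li', htop'⟩ := exists_linearOrder_top (X := Finset K) t'
  have hwO : w ∈ OptionSet (vbc W) i Li := by
    refine optionSet_suff W hW i Li w ?_ ?_
    · rw [htop]; exact hc1
    · rw [htop]; exact hc2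
  have hO' : ∀ y ∈ OptionSet (vbc W) i Li', y ≠ w := by
    intro y hy hyw
    subst hyw
    have hnecc := optionSet_necc W hW i Li' y hy
    rw [htop'] at hnecc
    exact hc4 hnecc
  obtain ⟨P, hPi, hfP⟩ := hwO
  intro hN
  apply hN i Li Li'
  constructor
  · refine ⟨P, hPi, ?_⟩
    have hup : vbc W (Function.update P i Li') ∈ OptionSet (vbc W) i Li' :=
      ⟨Function.update P i Li', Function.update_self i Li' P, rfl⟩
    have hne := hO' _ hup
    rw [hfP]
    exact hbot _ hne
  · left
    exact ⟨w, ⟨P, hPi, hfP⟩, fun w' hw' => hbot w' (hO' w' hw')⟩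

end Main
/-- A non-dictatorial voting by committees is NOM iff for every object `k`: (i) the
intersection of all coalitions in `W k` is empty, and (ii) every coalition in `W k`
has at least two members. -/
theorem vbc_NOM {n : ℕ} {K : Type*} [Fintype K] [DecidableEq K]
    (hn : 2 ≤ n) (hK : 2 ≤ Fintype.card K)
    (W : K → Set (Finset (Fin n))) (hW : ∀ k, Committee (W k))
    (hnd : ¬ Dictatorial (vbc W)) :
    NOM (vbc W) ↔ ∀ k : K,
      (⋂ M ∈ W k, (M : Set (Fin n))) = ∅ ∧ ∀ M ∈ W k, 2 ≤ M.card := by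
  constructor
  · intro hN k
    constructor
    · by_contra hne
      obtain ⟨i, hi⟩ := Set.nonempty_iff_ne_empty.2 hne
      have hv : ∀ M ∈ W k, i ∈ M := by
        intro M hM
        exact Set.mem_iInter₂.1 hi M hM
      exact not_NOM_of W hW hK hnd i k (Or.inr hv) hN
    · intro M hM
      by_contra hcard
      push_neg at hcard
      have h1 : M.card = 1 := by
        have hne := (hW k).2.1 M hM
        have := Finset.card_pos.2 hne
        omega
      obtain ⟨i, hi⟩ := Finset.card_eq_one.1 h1
      subst hi
      exact not_NOM_of W hW hK hnd i k (Or.inl hM) hN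
  · intro hcond
    have hfull : ∀ (i : Fin n) (L : LinearOrder (Finset K)) (x : Finset K),
        x ∈ OptionSet (vbc W) i L := by
      intro i L x
      refine optionSet_suff W hW i L x ?_ ?_
      · intro k _ hf
        have := (hcond k).2 {i} hf
        simp at this
      · intro k _ hv
        have h := (hcond k).1
        have hm : i ∈ ⋂ M ∈ W k, (M : Set (Fin n)) :=
          Set.mem_iInter₂.2 (fun M hM => hv M hM)
        rw [h] at hm
        exact hm.elim
    intro i Li Li'
    rintro ⟨-, hor⟩
    have hirr : ∀ z : Finset K, ¬ Li.lt z z :=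
      fun z => @lt_irrefl (Finset K) Li.toPartialOrder.toPreorder z
    rcases hor with ⟨w, -, hall⟩ | ⟨b', -, hall⟩
    · exact hirr w (hall w (hfull i Li' w))
    · exact hirr b' (hall b' (hfull i Li b'))
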